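/- Suppose for each 1 ≤ j ≤ p we have a family of n vectors in C^{d_j} (indexed by a common set of size n), with the properties: (a) the corresponding n product states are mutually orthogonal; (b) for each j < p, any d_j distinct vectors of the j-th family span C^{d_j}; (c) any d_p + 1 distinct vectors of the p-th family span C^{d_p}; and (d) n ≥ (d_1 - 1) + ... + (d_{p-1} - 1) + d_p + 1. Then the n product states form an unextendible product basis. -/

import Mathlib

/-!
The inner product of two product vectors is the product of the inner products of their factors.
So if a nonzero product vector `⊗ g j` were orthogonal to all `n` given states, every index `i`
would have a factor `j` with `⟪vec j i, g j⟫ = 0`. When any `m j` vectors of the `j`-th family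
span, the nonzero vector `g j` is orthogonal to at most `m j - 1` of them, so at most
`∑ j, (m j - 1) < n` indices can be covered this way. Here `m j = d j` for `j < p` and
`m p = d p + 1`.
-/

open scoped Classical

/-- The product (tensor) vector in `ℂ^{d₁} ⊗ ⋯ ⊗ ℂ^{d_p}`, realized as
`EuclideanSpace ℂ (Π j, Fin (d j))`, built from local vectors `f j`. -/
noncomputable def prodVec {p : ℕ} {d : Fin p → ℕ}
    (f : ∀ j, EuclideanSpace ℂ (Fin (d j))) :
    EuclideanSpace ℂ (∀ j, Fin (d j)) :=
  WithLp.toLp 2 (fun x => ∏ j, f j (x j))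

/-- A product state: a nonzero vector of the form `v₁ ⊗ ⋯ ⊗ v_p`. -/
def IsProductState {p : ℕ} {d : Fin p → ℕ}
    (v : EuclideanSpace ℂ (∀ j, Fin (d j))) : Prop :=
  v ≠ 0 ∧ ∃ f : ∀ j, EuclideanSpace ℂ (Fin (d j)), v = prodVec f

/-- An unextendible product basis: a finite set of mutually orthogonal product
states such that every product state orthogonal to all of them is zero
(equivalently, no product state is orthogonal to all of them). -/
def IsUPB {p : ℕ} {d : Fin p → ℕ}
    (S : Finset (EuclideanSpace ℂ (∀ j, Fin (d j)))) : Prop :=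
  (∀ v ∈ S, IsProductState v) ∧
  (∀ v ∈ S, ∀ w ∈ S, v ≠ w → (inner ℂ v w : ℂ) = 0) ∧
  ∀ z : EuclideanSpace ℂ (∀ j, Fin (d j)),
    IsProductState z → ¬ (∀ v ∈ S, (inner ℂ v z : ℂ) = 0)

section Orthogonality

variable {𝕜 E ι : Type*} [RCLike 𝕜] [NormedAddCommGroup E] [InnerProductSpace 𝕜 E]

lemma eq_zero_of_forall_inner_eq_zero_of_span_eq_top {s : Set E}
    (hs : Submodule.span 𝕜 s = ⊤) {z : E} (hz : ∀ x ∈ s, (inner 𝕜 x z : 𝕜) = 0) :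
    z = 0 := by
  have hle : Submodule.span 𝕜 s ≤ (𝕜 ∙ z)ᗮ :=
    Submodule.span_le.mpr fun x hx =>
      Submodule.mem_orthogonal_singleton_iff_inner_left.mpr (hz x hx)
  have hzz := (Submodule.mem_orthogonal_singleton_iff_inner_right (𝕜 := 𝕜)).mp
    (hle (hs ▸ Submodule.mem_top : z ∈ Submodule.span 𝕜 s))
  exact inner_self_eq_zero.mp hzz

lemma card_filter_inner_eq_zero_lt [Fintype ι] (v : ι → E) {z : E} (hz : z ≠ 0) (m : ℕ)
    (hspan : ∀ T : Finset ι, T.card = m → Submodule.span 𝕜 (v '' T) = ⊤) :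
    (Finset.univ.filter fun i => (inner 𝕜 (v i) z : 𝕜) = 0).card < m := by
  by_contra! hm
  obtain ⟨T, hTsub, hTcard⟩ := Finset.exists_subset_card_eq hm
  refine hz (eq_zero_of_forall_inner_eq_zero_of_span_eq_top (hspan T hTcard) ?_)
  rintro _ ⟨i, hi, rfl⟩
  exact (Finset.mem_filter.mp (hTsub hi)).2

end Orthogonality

section ProductVectors

variable {p : ℕ} {d : Fin p → ℕ}

lemma prodVec_eq_zero_of_eq_zero (f : ∀ j, EuclideanSpace ℂ (Fin (d j))) {j : Fin p}
    (h : f j = 0) : prodVec f = 0 := by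
  ext x
  have hx : f j (x j) = 0 := by rw [h]; rfl
  simpa [prodVec] using Finset.prod_eq_zero (Finset.mem_univ j) hx

lemma inner_prodVec (f g : ∀ j, EuclideanSpace ℂ (Fin (d j))) :
    (inner ℂ (prodVec f) (prodVec g) : ℂ) = ∏ j, (inner ℂ (f j) (g j) : ℂ) := by
  simp only [PiLp.inner_apply, RCLike.inner_apply, prodVec, map_prod]
  rw [Finset.prod_univ_sum, Fintype.piFinset_univ]
  exact Finset.sum_congr rfl fun x _ => Finset.prod_mul_distrib.symm

theorem exists_inner_prodVec_ne_zero {ι : Type*} [Fintype ι]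
    (vec : ∀ j, ι → EuclideanSpace ℂ (Fin (d j))) (m : Fin p → ℕ)
    (hspan : ∀ j (T : Finset ι), T.card = m j → Submodule.span ℂ (vec j '' T) = ⊤)
    (hcard : ∑ j, (m j - 1) < Fintype.card ι)
    {g : ∀ j, EuclideanSpace ℂ (Fin (d j))} (hg : prodVec g ≠ 0) :
    ∃ i, (inner ℂ (prodVec fun j => vec j i) (prodVec g) : ℂ) ≠ 0 := by
  by_contra! hall
  set S : Fin p → Finset ι :=
    fun j => Finset.univ.filter fun i => (inner ℂ (vec j i) (g j) : ℂ) = 0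
  have hS_card : ∀ j, (S j).card ≤ m j - 1 := fun j =>
    Nat.le_sub_one_of_lt <| card_filter_inner_eq_zero_lt (vec j)
      (fun h => hg (prodVec_eq_zero_of_eq_zero g h)) (m j) (hspan j)
  have hS_cover : Finset.univ ⊆ Finset.univ.biUnion S := fun i _ => by
    have h0 := hall i
    rw [inner_prodVec, Finset.prod_eq_zero_iff] at h0
    obtain ⟨j, -, hj⟩ := h0
    exact Finset.mem_biUnion.mpr
      ⟨j, Finset.mem_univ j, Finset.mem_filter.mpr ⟨Finset.mem_univ i, hj⟩⟩
  have : Fintype.card ι ≤ ∑ j, (m j - 1) :=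
    calc Fintype.card ι ≤ (Finset.univ.biUnion S).card := Finset.card_le_card hS_cover
      _ ≤ ∑ j, (S j).card := Finset.card_biUnion_le
      _ ≤ ∑ j, (m j - 1) := Finset.sum_le_sum fun j _ => hS_card j
  omega

end ProductVectors

theorem stmt3_general {p n : ℕ} (d : Fin (p + 1) → ℕ)
    (vec : ∀ j : Fin (p + 1), Fin n → EuclideanSpace ℂ (Fin (d j)))
    (hnz : ∀ i : Fin n, prodVec (fun j => vec j i) ≠ 0)
    (horth : ∀ i k : Fin n, i ≠ k →
      (inner ℂ (prodVec fun j => vec j i) (prodVec fun j => vec j k) : ℂ) = 0)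
    (hspan1 : ∀ j : Fin p, ∀ T : Finset (Fin n), T.card = d j.castSucc →
      Submodule.span ℂ (vec j.castSucc '' ↑T) = ⊤)
    (hspan2 : ∀ T : Finset (Fin n), T.card = d (Fin.last p) + 1 →
      Submodule.span ℂ (vec (Fin.last p) '' ↑T) = ⊤)
    (hn : (∑ j : Fin p, (d j.castSucc - 1)) + d (Fin.last p) + 1 ≤ n) :
    IsUPB (Finset.univ.image fun i => prodVec fun j => vec j i) := by
  refine ⟨?_, ?_, ?_⟩
  · simp only [Finset.mem_image, Finset.mem_univ, true_and, forall_exists_index,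
      forall_apply_eq_imp_iff]
    exact fun i => ⟨hnz i, _, rfl⟩
  · simp only [Finset.mem_image, Finset.mem_univ, true_and, forall_exists_index,
      forall_apply_eq_imp_iff]
    exact fun i k hik => horth i k fun h => hik (h ▸ rfl)
  · rintro z ⟨hz, g, rfl⟩ hall
    let m : Fin (p + 1) → ℕ := Fin.lastCases (d (Fin.last p) + 1) fun j => d j.castSucc
    have hspan : ∀ j (T : Finset (Fin n)), T.card = m j →
        Submodule.span ℂ (vec j '' T) = ⊤ :=
      Fin.lastCases (by simpa [m] using hspan2) fun j => by simpa [m] using hspan1 j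
    have hcard : ∑ j, (m j - 1) < Fintype.card (Fin n) := by
      simp only [Fin.sum_univ_castSucc, m, Fin.lastCases_last, Fin.lastCases_castSucc,
        Fintype.card_fin]
      omega
    obtain ⟨i, hi⟩ := exists_inner_prodVec_ne_zero vec m hspan hcard hz
    exact hi (hall _ (Finset.mem_image_of_mem _ (Finset.mem_univ i)))

theorem stmt3 {p n : ℕ} (d : Fin (p + 1) → ℕ) (hd : ∀ j, 1 ≤ d j)
    (vec : ∀ j : Fin (p + 1), Fin n → EuclideanSpace ℂ (Fin (d j)))
    (hnz : ∀ i : Fin n, prodVec (fun j => vec j i) ≠ 0)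
    (horth : ∀ i k : Fin n, i ≠ k →
      (inner ℂ (prodVec fun j => vec j i) (prodVec fun j => vec j k) : ℂ) = 0)
    (hspan1 : ∀ j : Fin p, ∀ T : Finset (Fin n), T.card = d j.castSucc →
      Submodule.span ℂ (vec j.castSucc '' ↑T) = ⊤)
    (hspan2 : ∀ T : Finset (Fin n), T.card = d (Fin.last p) + 1 →
      Submodule.span ℂ (vec (Fin.last p) '' ↑T) = ⊤)
    (hn : (∑ j : Fin p, (d j.castSucc - 1)) + d (Fin.last p) + 1 ≤ n) :
    IsUPB (Finset.univ.image fun i => prodVec fun j => vec j i) :=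
  stmt3_general d vec hnz horth hspan1 hspan2 hn
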